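/- Let p and q be coprime integers with p > q > 1. For every n ∈ ℕ, the set {ρ(w) : w labels a branch of T_{p/q} from n} equals the closed interval [ρ(minword(n)), ρ(maxword(n))]. -/

import Mathlib

/-- `w` labels a branch of the base-p/q automaton with digit set `E` from state `n`:
there are states `s 0 = n, s 1, s 2, …` with `q·s(k+1) = p·s k + w k` and `w k ∈ E`. -/
def IsBranch (p q : ℕ) (E : Set ℤ) (n : ℕ) (w : ℕ → ℤ) : Prop :=
  ∃ s : ℕ → ℕ, s 0 = n ∧ ∀ k : ℕ, (q : ℤ) * s (k + 1) = p * s k + w k ∧ w k ∈ E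

/-- `u` (a word of length `ℓ`) labels a path from `n` to `m` in the base-p/q automaton
with digit set `E`. -/
def IsPath (p q : ℕ) (E : Set ℤ) (n m ℓ : ℕ) (u : ℕ → ℤ) : Prop :=
  ∃ s : ℕ → ℕ, s 0 = n ∧ s ℓ = m ∧
    ∀ k < ℓ, (q : ℤ) * s (k + 1) = p * s k + u k ∧ u k ∈ E

/-- The canonical digit alphabet `A_p = {0, 1, …, p−1}`. -/
def Ap (p : ℕ) : Set ℤ := Set.Icc 0 ((p : ℤ) - 1)

/-- The lower alphabet `{0, 1, …, q−1}`. -/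
def LowAlph (q : ℕ) : Set ℤ := Set.Icc 0 ((q : ℤ) - 1)

/-- The upper alphabet `{p−q, …, p−1}`. -/
def UpAlph (p q : ℕ) : Set ℤ := Set.Icc ((p : ℤ) - q) ((p : ℤ) - 1)

/-- The alphabet `D = {p−2q+1, …, p−1}` of the automaton `S_{p/q}`. -/
def Dalph (p q : ℕ) : Set ℤ := Set.Icc ((p : ℤ) - 2 * q + 1) ((p : ℤ) - 1)

/-- Evaluation after the radix point: `ρ(w) = Σ_{i≥1} (w_i/q)·(q/p)^i`
(here `w k` is the `(k+1)`-st digit). -/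
noncomputable def rho (p q : ℕ) (w : ℕ → ℤ) : ℝ :=
  ∑' i : ℕ, ((w i : ℝ) / q) * ((q : ℝ) / p) ^ (i + 1)

/-! A branch with states `s` and digits `w` satisfies `s 0 + ρ w = lim (q/p)^N · s N`, so two
branches can be compared through their states. Branches with lower (resp. upper) digits have
states staying below (resp. above) those of any other branch from the same state, which gives the
inclusion `⊆`; the same comparison shows that the intervals
`I m = [m + ρ(minword m), m + ρ(maxword m)]` of consecutive states overlap. Since `I m` lies in
`q/p` times the union of the intervals of the successors of `m`, and these successors are
consecutive, every point of `I n` can be followed down a branch whose value is that point. -/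

open Filter Topology Set

lemma exists_mem_Icc_of_chain {α : Type*} [LinearOrder α] {L U : ℕ → α}
    (hLU : ∀ j, L (j + 1) ≤ U j) {a b : ℕ} (hab : a ≤ b) {y : α}
    (hy : y ∈ Icc (L a) (U b)) :
    ∃ j ∈ Icc a b, y ∈ Icc (L j) (U j) := by
  induction b, hab using Nat.le_induction with
  | base => exact ⟨a, ⟨le_rfl, le_rfl⟩, hy⟩
  | succ b hab ih =>
    by_cases h : y ≤ U b
    · obtain ⟨j, hj, hyj⟩ := ih ⟨hy.1, h⟩
      exact ⟨j, ⟨hj.1, hj.2.trans b.le_succ⟩, hyj⟩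
    · exact ⟨b + 1, ⟨hab.trans b.le_succ, le_rfl⟩, (hLU b).trans (not_le.1 h).le, hy.2⟩

lemma exists_seq_of_forall_exists {α : Type*} {Q : ℕ → α → Prop} {R : α → α → Prop}
    (h : ∀ N a, Q N a → ∃ b, R a b ∧ Q (N + 1) b) {a : α} (ha : Q 0 a) :
    ∃ f : ℕ → α, f 0 = a ∧ ∀ N, R (f N) (f (N + 1)) ∧ Q N (f N) := by
  have : Nonempty α := ⟨a⟩
  choose! g hg using h
  let f : ℕ → α := fun N => Nat.rec a (fun N b => g N b) N
  have hf (N : ℕ) : Q N (f N) := Nat.rec ha (fun N ih => (hg N _ ih).2) N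
  exact ⟨f, rfl, fun N => ⟨(hg N _ (hf N)).1, hf N⟩⟩

section Evaluation

variable {p q : ℕ}

lemma cast_div_cast_lt_one (hpq : q < p) : (q : ℝ) / p < 1 :=
  (div_lt_one (by exact_mod_cast (Nat.zero_le q).trans_lt hpq)).2 (by exact_mod_cast hpq)

lemma LowAlph_subset_Ap (hqp : q ≤ p) : LowAlph q ⊆ Ap p := fun _ ⟨h0, h1⟩ =>
  ⟨h0, by omega⟩

lemma UpAlph_subset_Ap (hqp : q ≤ p) : UpAlph p q ⊆ Ap p := fun _ ⟨h0, h1⟩ =>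
  ⟨by omega, h1⟩

lemma rho_term_mem_Icc (hq : 0 < q) (hpq : q < p) {w : ℕ → ℤ} (hw : ∀ i, w i ∈ Ap p)
    (i : ℕ) :
    ((w i : ℝ) / q) * ((q : ℝ) / p) ^ (i + 1) ∈ Icc 0 (((q : ℝ) / p) ^ i) := by
  have hp : (0 : ℝ) < p := by exact_mod_cast hq.trans hpq
  have hq' : (q : ℝ) ≠ 0 := by positivity
  have hw0 : (0 : ℝ) ≤ w i := by exact_mod_cast (hw i).1
  have hwp : (w i : ℝ) ≤ p := by
    have := (hw i).2; exact_mod_cast (by omega : w i ≤ p)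
  have hterm : ((w i : ℝ) / q) * ((q : ℝ) / p) ^ (i + 1) = (w i / p) * ((q : ℝ) / p) ^ i := by
    rw [pow_succ]; field_simp
  rw [hterm]
  exact ⟨by positivity, mul_le_of_le_one_left (by positivity) (div_le_one_of_le₀ hwp hp.le)⟩

lemma summable_rho (hq : 0 < q) (hpq : q < p) {w : ℕ → ℤ} (hw : ∀ i, w i ∈ Ap p) :
    Summable (fun i => ((w i : ℝ) / q) * ((q : ℝ) / p) ^ (i + 1)) :=
  Summable.of_nonneg_of_le (fun i => (rho_term_mem_Icc hq hpq hw i).1)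
    (fun i => (rho_term_mem_Icc hq hpq hw i).2)
    (summable_geometric_of_lt_one (by positivity) (cast_div_cast_lt_one hpq))

lemma rho_nonneg (hq : 0 < q) (hpq : q < p) {w : ℕ → ℤ} (hw : ∀ i, w i ∈ Ap p) :
    0 ≤ rho p q w :=
  tsum_nonneg fun i => (rho_term_mem_Icc hq hpq hw i).1

lemma rho_le_inv_one_sub (hq : 0 < q) (hpq : q < p) {w : ℕ → ℤ} (hw : ∀ i, w i ∈ Ap p) :
    rho p q w ≤ (1 - (q : ℝ) / p)⁻¹ := by
  rw [← tsum_geometric_of_lt_one (by positivity) (cast_div_cast_lt_one hpq)]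
  exact Summable.tsum_le_tsum (fun i => (rho_term_mem_Icc hq hpq hw i).2) (summable_rho hq hpq hw)
    (summable_geometric_of_lt_one (by positivity) (cast_div_cast_lt_one hpq))

end Evaluation

section BranchValue

variable {p q : ℕ} {s t : ℕ → ℕ} {w v : ℕ → ℤ}

lemma sum_range_rho_term (hq : 0 < q) (hpq : q < p)
    (hs : ∀ k, (q : ℤ) * s (k + 1) = p * s k + w k) (N : ℕ) :
    ∑ i ∈ Finset.range N, ((w i : ℝ) / q) * ((q : ℝ) / p) ^ (i + 1)
      = ((q : ℝ) / p) ^ N * s N - s 0 := by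
  have hp : (p : ℝ) ≠ 0 := by exact_mod_cast (hq.trans hpq).ne'
  have hq' : (q : ℝ) ≠ 0 := by exact_mod_cast hq.ne'
  induction N with
  | zero => simp
  | succ N ih =>
    have hsN : (s (N + 1) : ℝ) = (p * s N + w N) / q := by
      rw [eq_div_iff hq', mul_comm]; exact_mod_cast hs N
    rw [Finset.sum_range_succ, ih, hsN, pow_succ]
    field_simp
    ring

lemma tendsto_pow_mul_state (hq : 0 < q) (hpq : q < p)
    (hs : ∀ k, (q : ℤ) * s (k + 1) = p * s k + w k ∧ w k ∈ Ap p) :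
    Tendsto (fun N => ((q : ℝ) / p) ^ N * s N) atTop (𝓝 (s 0 + rho p q w)) := by
  have h := ((summable_rho hq hpq fun k => (hs k).2).hasSum.tendsto_sum_nat).const_add (s 0 : ℝ)
  simpa only [rho, sum_range_rho_term hq hpq (fun k => (hs k).1), add_sub_cancel] using h

lemma div_mul_add_rho_eq_tail (hq : 0 < q) (hpq : q < p)
    (hs : ∀ k, (q : ℤ) * s (k + 1) = p * s k + w k ∧ w k ∈ Ap p) :
    (p : ℝ) / q * (s 0 + rho p q w) = s 1 + rho p q (fun k => w (k + 1)) := by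
  have hshift := (tendsto_pow_mul_state (s := fun k => s (k + 1)) hq hpq
    fun k => hs (k + 1)).const_mul ((q : ℝ) / p)
  have h : (s 0 : ℝ) + rho p q w = (q : ℝ) / p * (s 1 + rho p q (fun k => w (k + 1))) := by
    refine tendsto_nhds_unique
      ((tendsto_pow_mul_state hq hpq hs).comp (tendsto_add_atTop_nat 1)) ?_
    simpa only [Function.comp_def, ← mul_assoc, ← pow_succ', zero_add] using hshift
  rw [h, ← mul_assoc, div_mul_div_cancel₀ (by exact_mod_cast hq.ne'),
    div_self (by exact_mod_cast (hq.trans hpq).ne'), one_mul]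

lemma state_le_add
    (hs : ∀ k, (q : ℤ) * s (k + 1) = p * s k + w k)
    (ht : ∀ k, (q : ℤ) * t (k + 1) = p * t k + v k) (e : ℤ) (h0 : (s 0 : ℤ) ≤ t 0 + e)
    (hd : ∀ k, w k - v k ≤ (q - p) * e + q - 1) (N : ℕ) :
    (s N : ℤ) ≤ t N + e := by
  induction N with
  | zero => exact h0
  | succ N ih =>
    have hlt : (q : ℤ) * s (N + 1) < q * (t (N + 1) + e + 1) := by
      linarith [hs N, ht N, hd N, mul_le_mul_of_nonneg_left ih (Int.natCast_nonneg p)]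
    have := lt_of_mul_lt_mul_left hlt (Int.natCast_nonneg q)
    omega

lemma add_rho_le_add_rho (hq : 0 < q) (hpq : q < p)
    (hs : ∀ k, (q : ℤ) * s (k + 1) = p * s k + w k ∧ w k ∈ Ap p)
    (ht : ∀ k, (q : ℤ) * t (k + 1) = p * t k + v k ∧ v k ∈ Ap p)
    (e : ℤ) (h0 : (s 0 : ℤ) ≤ t 0 + e) (hd : ∀ k, w k - v k ≤ (q - p) * e + q - 1) :
    s 0 + rho p q w ≤ t 0 + rho p q v := by
  have hsN (N : ℕ) : (s N : ℝ) ≤ t N + e := by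
    exact_mod_cast state_le_add (fun k => (hs k).1) (fun k => (ht k).1) e h0 hd N
  have hupper := (tendsto_pow_mul_state hq hpq ht).add
    ((tendsto_pow_atTop_nhds_zero_of_lt_one (by positivity)
      (cast_div_cast_lt_one hpq)).mul_const (e : ℝ))
  rw [zero_mul, add_zero] at hupper
  refine le_of_tendsto_of_tendsto' (tendsto_pow_mul_state hq hpq hs) hupper fun N => ?_
  rw [← mul_add]
  exact mul_le_mul_of_nonneg_left (hsN N) (by positivity)

lemma add_rho_eq_of_forall_mem_Icc (hq : 0 < q) (hpq : q < p)
    (hs : ∀ k, (q : ℤ) * s (k + 1) = p * s k + w k ∧ w k ∈ Ap p) {X B : ℝ}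
    (hX : ∀ N, ((p : ℝ) / q) ^ N * X ∈ Icc (s N : ℝ) (s N + B)) :
    s 0 + rho p q w = X := by
  have hpow (N : ℕ) : ((q : ℝ) / p) ^ N * (((p : ℝ) / q) ^ N * X) = X := by
    rw [← mul_assoc, ← mul_pow, div_mul_div_cancel₀ (by exact_mod_cast (hq.trans hpq).ne'),
      div_self (by exact_mod_cast hq.ne'), one_pow, one_mul]
  have hlower := tendsto_const_nhds (x := X) |>.sub
    ((tendsto_pow_atTop_nhds_zero_of_lt_one (by positivity) (cast_div_cast_lt_one hpq)).mul_const B)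
  rw [zero_mul, sub_zero] at hlower
  refine tendsto_nhds_unique (tendsto_pow_mul_state hq hpq hs)
    (tendsto_of_tendsto_of_tendsto_of_le_of_le hlower tendsto_const_nhds (fun N => ?_) fun N => ?_)
  · have := mul_le_mul_of_nonneg_left (hX N).2 (pow_nonneg (by positivity : (0 : ℝ) ≤ q / p) N)
    rw [hpow] at this
    linarith
  · have := mul_le_mul_of_nonneg_left (hX N).1 (pow_nonneg (by positivity : (0 : ℝ) ≤ q / p) N)
    rwa [hpow] at this

end BranchValue

section ExtremalBranches

variable {p q : ℕ} {n : ℕ} {E F : Set ℤ} {u v w : ℕ → ℤ}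

lemma IsBranch.mono (hEF : E ⊆ F) (hw : IsBranch p q E n w) : IsBranch p q F n w :=
  let ⟨s, hs0, hs⟩ := hw
  ⟨s, hs0, fun k => ⟨(hs k).1, hEF (hs k).2⟩⟩

lemma IsBranch.mem (hw : IsBranch p q E n w) (k : ℕ) : w k ∈ E :=
  let ⟨_, _, hs⟩ := hw
  (hs k).2

lemma rho_le_rho_of_LowAlph (hq : 0 < q) (hpq : q < p) (hu : IsBranch p q (LowAlph q) n u)
    (hw : IsBranch p q (Ap p) n w) : rho p q u ≤ rho p q w := by
  obtain ⟨s, hs0, hs⟩ := hu.mono (LowAlph_subset_Ap hpq.le)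
  obtain ⟨t, ht0, ht⟩ := hw
  have := add_rho_le_add_rho hq hpq hs ht 0 (by omega) fun k => by
    have := (hu.mem k).2; have := (ht k).2.1; omega
  rw [hs0, ht0] at this
  linarith

lemma rho_le_rho_of_UpAlph (hq : 0 < q) (hpq : q < p) (hw : IsBranch p q (Ap p) n w)
    (hv : IsBranch p q (UpAlph p q) n v) : rho p q w ≤ rho p q v := by
  obtain ⟨s, hs0, hs⟩ := hw
  obtain ⟨t, ht0, ht⟩ := hv.mono (UpAlph_subset_Ap hpq.le)
  have := add_rho_le_add_rho hq hpq hs ht 0 (by omega) fun k => by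
    have := (hs k).2.2; have := (hv.mem k).1; omega
  rw [hs0, ht0] at this
  linarith

lemma one_add_rho_le_of_succ (hq : 0 < q) (hpq : q < p) {m : ℕ}
    (hu : IsBranch p q (LowAlph q) (m + 1) u) (hv : IsBranch p q (UpAlph p q) m v) :
    1 + rho p q u ≤ rho p q v := by
  obtain ⟨s, hs0, hs⟩ := hu.mono (LowAlph_subset_Ap hpq.le)
  obtain ⟨t, ht0, ht⟩ := hv.mono (UpAlph_subset_Ap hpq.le)
  have := add_rho_le_add_rho hq hpq hs ht 1 (by omega) fun k => by
    have := (hu.mem k).2; have := (hv.mem k).1; omega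
  rw [hs0, ht0] at this
  push_cast at this
  linarith

lemma add_rho_le_div_mul_of_LowAlph (hq : 0 < q) (hpq : q < p) {s : ℕ → ℕ}
    (hs : ∀ k, (q : ℤ) * s (k + 1) = p * s k + w k ∧ w k ∈ Ap p)
    (hu : IsBranch p q (LowAlph q) (s 1) u) :
    s 1 + rho p q u ≤ (p : ℝ) / q * (s 0 + rho p q w) := by
  rw [div_mul_add_rho_eq_tail hq hpq hs]
  have := rho_le_rho_of_LowAlph hq hpq hu ⟨fun k => s (k + 1), rfl, fun k => hs (k + 1)⟩
  linarith

lemma div_mul_add_rho_le_of_UpAlph (hq : 0 < q) (hpq : q < p) {s : ℕ → ℕ}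
    (hs : ∀ k, (q : ℤ) * s (k + 1) = p * s k + w k ∧ w k ∈ Ap p)
    (hv : IsBranch p q (UpAlph p q) (s 1) v) :
    (p : ℝ) / q * (s 0 + rho p q w) ≤ s 1 + rho p q v := by
  rw [div_mul_add_rho_eq_tail hq hpq hs]
  have := rho_le_rho_of_UpAlph hq hpq ⟨fun k => s (k + 1), rfl, fun k => hs (k + 1)⟩ hv
  linarith

lemma Icc_add_rho_subset (hq : 0 < q) (hpq : q < p) (hu : IsBranch p q (LowAlph q) n u)
    (hv : IsBranch p q (UpAlph p q) n v) :
    Icc (n + rho p q u) (n + rho p q v) ⊆ Icc (n : ℝ) (n + (1 - (q : ℝ) / p)⁻¹) :=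
  Icc_subset_Icc
    (le_add_of_nonneg_right (rho_nonneg hq hpq (hu.mono (LowAlph_subset_Ap hpq.le)).mem))
    (add_le_add_right (rho_le_inv_one_sub hq hpq (hv.mono (UpAlph_subset_Ap hpq.le)).mem) _)

end ExtremalBranches
-- The successors of `m` are the states between the first states of its two extremal branches.
lemma exists_succ_mem_Icc {p q : ℕ} (hq : 0 < q) (hpq : q < p) {mw mx : ℕ → ℕ → ℤ}
    (hmw : ∀ n, IsBranch p q (LowAlph q) n (mw n))
    (hmx : ∀ n, IsBranch p q (UpAlph p q) n (mx n)) (m : ℕ) {X : ℝ}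
    (hX : X ∈ Icc (m + rho p q (mw m)) (m + rho p q (mx m))) :
    ∃ m' : ℕ, (q : ℤ) * m' - p * m ∈ Ap p ∧
      (p : ℝ) / q * X ∈ Icc (m' + rho p q (mw m')) (m' + rho p q (mx m')) := by
  obtain ⟨s, hs0, hs⟩ := (hmw m).mono (LowAlph_subset_Ap hpq.le)
  obtain ⟨t, ht0, ht⟩ := (hmx m).mono (UpAlph_subset_Ap hpq.le)
  have hlow := add_rho_le_div_mul_of_LowAlph hq hpq hs (hmw (s 1))
  have hup := div_mul_add_rho_le_of_UpAlph hq hpq ht (hmx (t 1))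
  rw [hs0] at hlow
  rw [ht0] at hup
  have hst : s 1 ≤ t 1 := by
    have := state_le_add (fun k => (hs k).1) (fun k => (ht k).1) 0 (by omega) (fun k => by
      have := ((hmw m).mem k).2; have := ((hmx m).mem k).1; omega) 1
    omega
  have hpq0 : (0 : ℝ) ≤ p / q := by positivity
  obtain ⟨j, hj, hXj⟩ := exists_mem_Icc_of_chain
    (L := fun j : ℕ => (j : ℝ) + rho p q (mw j)) (U := fun j : ℕ => (j : ℝ) + rho p q (mx j))
    (fun j => by
      have := one_add_rho_le_of_succ hq hpq (hmw (j + 1)) (hmx j); push_cast; linarith)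
    hst ⟨hlow.trans (mul_le_mul_of_nonneg_left hX.1 hpq0),
      (mul_le_mul_of_nonneg_left hX.2 hpq0).trans hup⟩
  have hs1 : (q : ℤ) * s 1 = p * m + mw m 0 := by simpa only [hs0] using (hs 0).1
  have ht1 : (q : ℤ) * t 1 = p * m + mx m 0 := by simpa only [ht0] using (ht 0).1
  have hsj : (q : ℤ) * s 1 ≤ q * j :=
    mul_le_mul_of_nonneg_left (by exact_mod_cast hj.1) (by positivity)
  have hjt : (q : ℤ) * j ≤ q * t 1 :=
    mul_le_mul_of_nonneg_left (by exact_mod_cast hj.2) (by positivity)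
  have := ((hmw m).mem 0).1; have := ((hmx m).mem 0).2
  exact ⟨j, ⟨by linarith, by linarith⟩, hXj⟩

theorem stmt19_general (p q : ℕ) (hq : 1 < q) (hpq : q < p)
    (mw mx : ℕ → ℕ → ℤ)
    (hmw : ∀ n, IsBranch p q (LowAlph q) n (mw n))
    (hmx : ∀ n, IsBranch p q (UpAlph p q) n (mx n)) :
    ∀ n : ℕ,
      {x : ℝ | ∃ w : ℕ → ℤ, IsBranch p q (Ap p) n w ∧ x = rho p q w}
        = Set.Icc (rho p q (mw n)) (rho p q (mx n)) := by
  have hq0 : 0 < q := by omega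
  intro n
  ext x
  constructor
  · rintro ⟨w, hw, rfl⟩
    exact ⟨rho_le_rho_of_LowAlph hq0 hpq (hmw n) hw, rho_le_rho_of_UpAlph hq0 hpq hw (hmx n)⟩
  · intro hx
    obtain ⟨s, hs0, hs⟩ := exists_seq_of_forall_exists
      (Q := fun N m =>
        ((p : ℝ) / q) ^ N * (n + x) ∈ Icc (m + rho p q (mw m)) (m + rho p q (mx m)))
      (R := fun m m' => (q : ℤ) * m' - p * m ∈ Ap p) (a := n)
      (fun N m hm => by
        simpa only [pow_succ', mul_assoc] using exists_succ_mem_Icc hq0 hpq hmw hmx m hm)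
      (by simpa using hx)
    have hbranch (k : ℕ) : (q : ℤ) * s (k + 1) = p * s k + (q * s (k + 1) - p * s k) ∧
        (q : ℤ) * s (k + 1) - p * s k ∈ Ap p := ⟨by ring, (hs k).1⟩
    refine ⟨_, ⟨s, hs0, hbranch⟩, ?_⟩
    have hval := add_rho_eq_of_forall_mem_Icc hq0 hpq hbranch fun N =>
      Icc_add_rho_subset hq0 hpq (hmw (s N)) (hmx (s N)) (hs N).2
    rw [hs0] at hval
    linarith

theorem stmt19 (p q : ℕ) (hco : Nat.Coprime p q) (hq : 1 < q) (hpq : q < p)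
    (mw mx : ℕ → ℕ → ℤ)
    (hmw : ∀ n, IsBranch p q (LowAlph q) n (mw n))
    (hmx : ∀ n, IsBranch p q (UpAlph p q) n (mx n)) :
    ∀ n : ℕ,
      {x : ℝ | ∃ w : ℕ → ℤ, IsBranch p q (Ap p) n w ∧ x = rho p q w}
        = Set.Icc (rho p q (mw n)) (rho p q (mx n)) :=
  stmt19_general p q hq hpq mw mx hmw hmx
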